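/- arXiv:cs/0510036 — 9 statements merged into one kernel-verified Lean document; each statement's English description precedes it below -/
import Mathlib

section
/- Let S : Set (Set α) be a family of instances and ≻1, ≻2 preference relations on α such that ≻1 and ≻2 are strict partial orders relative to S and ≻1 is contained in ≻2 relative to S. Then for every finite instance r ∈ S: ω_≻1(ω_≻2(r)) = ω_≻2(ω_≻1(r)) = ω_≻2(r). -/
def winnow {α : Type*} (pref : α → α → Prop) (r : Set α) : Set α :=
  {t ∈ r | ¬ ∃ t' ∈ r, pref t' t}

section Winnow

variable {α : Type*} {p q : α → α → Prop} {r : Set α}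

theorem winnow_subset : winnow p r ⊆ r := fun _ ht => ht.1

theorem winnow_subset_winnow_of_imp (hpq : ∀ t₁ ∈ r, ∀ t₂ ∈ r, p t₁ t₂ → q t₁ t₂) :
    winnow q r ⊆ winnow p r := by
  rintro t ⟨htr, hundom⟩
  refine ⟨htr, ?_⟩
  rintro ⟨t', ht'r, ht't⟩
  exact hundom ⟨t', ht'r, hpq t' ht'r t htr ht't⟩

theorem winnow_winnow_of_imp (hpq : ∀ t₁ ∈ r, ∀ t₂ ∈ r, p t₁ t₂ → q t₁ t₂) :
    winnow p (winnow q r) = winnow q r := by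
  refine winnow_subset.antisymm fun t ht => ⟨ht, ?_⟩
  rintro ⟨t', ht', ht't⟩
  exact ht.2 ⟨t', ht'.1, hpq t' ht'.1 t ht.1 ht't⟩

theorem Set.Finite.wellFoundedOn_of_irrefl_of_trans (hr : r.Finite)
    (hirr : ∀ t ∈ r, ¬ p t t)
    (htrans : ∀ t₁ ∈ r, ∀ t₂ ∈ r, ∀ t₃ ∈ r, p t₁ t₂ → p t₂ t₃ → p t₁ t₃) :
    r.WellFoundedOn p := by
  have : Finite r := hr.to_subtype
  have : IsTrans r (Subrel p (· ∈ r)) :=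
    ⟨fun a b c => htrans a a.2 b b.2 c c.2⟩
  have : Std.Irrefl (Subrel p (· ∈ r)) := ⟨fun a => hirr a a.2⟩
  exact Finite.wellFounded_of_trans_of_irrefl _

/-- Among the `q`-dominators of `t`, a `p`-minimal one is undominated in all of `r`:
anything `p`-dominating it would also `q`-dominate `t`. -/
theorem exists_mem_winnow_dominating (hr : r.Finite)
    (hirr : ∀ t ∈ r, ¬ p t t)
    (hptrans : ∀ t₁ ∈ r, ∀ t₂ ∈ r, ∀ t₃ ∈ r, p t₁ t₂ → p t₂ t₃ → p t₁ t₃)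
    (hqtrans : ∀ t₁ ∈ r, ∀ t₂ ∈ r, ∀ t₃ ∈ r, q t₁ t₂ → q t₂ t₃ → q t₁ t₃)
    (hpq : ∀ t₁ ∈ r, ∀ t₂ ∈ r, p t₁ t₂ → q t₁ t₂) {t : α} (htr : t ∈ r)
    (hdom : ∃ t' ∈ r, q t' t) : ∃ m ∈ winnow p r, q m t := by
  obtain ⟨t', ht'r, ht't⟩ := hdom
  let dominators : Set r := {s | q s t}
  obtain ⟨m, hmt, hmin⟩ := (hr.wellFoundedOn_of_irrefl_of_trans hirr hptrans).has_min
    dominators ⟨⟨t', ht'r⟩, ht't⟩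
  refine ⟨m, ⟨m.2, ?_⟩, hmt⟩
  rintro ⟨u, hur, hum⟩
  exact hmin ⟨u, hur⟩ (hqtrans u hur m m.2 t htr (hpq u hur m m.2 hum) hmt) hum

theorem winnow_winnow_of_imp_of_finite (hr : r.Finite)
    (hirr : ∀ t ∈ r, ¬ p t t)
    (hptrans : ∀ t₁ ∈ r, ∀ t₂ ∈ r, ∀ t₃ ∈ r, p t₁ t₂ → p t₂ t₃ → p t₁ t₃)
    (hqtrans : ∀ t₁ ∈ r, ∀ t₂ ∈ r, ∀ t₃ ∈ r, q t₁ t₂ → q t₂ t₃ → q t₁ t₃)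
    (hpq : ∀ t₁ ∈ r, ∀ t₂ ∈ r, p t₁ t₂ → q t₁ t₂) :
    winnow q (winnow p r) = winnow q r := by
  ext t
  constructor
  · rintro ⟨htp, hundom⟩
    refine ⟨htp.1, fun hdom => ?_⟩
    exact hundom (exists_mem_winnow_dominating hr hirr hptrans hqtrans hpq htp.1 hdom)
  · intro htq
    refine ⟨winnow_subset_winnow_of_imp hpq htq, ?_⟩
    rintro ⟨t', ht'p, ht't⟩
    exact htq.2 ⟨t', ht'p.1, ht't⟩

end Winnow

theorem winnow_nested {α : Type*} (S : Set (Set α)) (pref1 pref2 : α → α → Prop)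
    (hspo1 : ∀ r ∈ S, (∀ t ∈ r, ¬ pref1 t t) ∧
      (∀ t1 ∈ r, ∀ t2 ∈ r, ∀ t3 ∈ r, pref1 t1 t2 → pref1 t2 t3 → pref1 t1 t3))
    (hspo2 : ∀ r ∈ S, (∀ t ∈ r, ¬ pref2 t t) ∧
      (∀ t1 ∈ r, ∀ t2 ∈ r, ∀ t3 ∈ r, pref2 t1 t2 → pref2 t2 t3 → pref2 t1 t3))
    (hcont : ∀ r ∈ S, ∀ t1 ∈ r, ∀ t2 ∈ r, pref1 t1 t2 → pref2 t1 t2) :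
    ∀ r ∈ S, r.Finite →
      winnow pref1 (winnow pref2 r) = winnow pref2 (winnow pref1 r) ∧
      winnow pref2 (winnow pref1 r) = winnow pref2 r := by
  intro r hrS hr
  obtain ⟨hirr1, htrans1⟩ := hspo1 r hrS
  have key := winnow_winnow_of_imp_of_finite hr hirr1 htrans1 (hspo2 r hrS).2 (hcont r hrS)
  exact ⟨(winnow_winnow_of_imp (hcont r hrS)).trans key.symm, key⟩
end

section
/- Let S : Set (Set α) be a family of instances and ≻1, ≻2 preference relations on α such that ≻1 is a weak order relative to S. Then for every instance r ∈ S: ω_{≻1 ▷ ≻2}(r) = ω_≻2(ω_≻1(r)), where ≻1 ▷ ≻2 is the prioritized composition of ≻1 and ≻2. -/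
def prioritized {α : Type*} (pref1 pref2 : α → α → Prop) : α → α → Prop :=
  fun t1 t2 => pref1 t1 t2 ∨ ((¬ pref1 t1 t2 ∧ ¬ pref1 t2 t1) ∧ pref2 t1 t2)

theorem winnow_collapse {α : Type*} (S : Set (Set α)) (pref1 pref2 : α → α → Prop)
    (hwo1 : ∀ r ∈ S, (∀ t ∈ r, ¬ pref1 t t) ∧
      (∀ t1 ∈ r, ∀ t2 ∈ r, ∀ t3 ∈ r, pref1 t1 t2 → pref1 t2 t3 → pref1 t1 t3) ∧
      (∀ t1 ∈ r, ∀ t2 ∈ r, ∀ t3 ∈ r, ¬ pref1 t1 t2 → ¬ pref1 t2 t3 → ¬ pref1 t1 t3)) :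
    ∀ r ∈ S, winnow (prioritized pref1 pref2) r = winnow pref2 (winnow pref1 r) := by
  intro r hr
  obtain ⟨_hirr, _htr, hnt⟩ := hwo1 r hr
  ext t
  simp only [winnow, prioritized, Set.mem_setOf_eq]
  constructor
  · rintro ⟨htr, hnd⟩
    have h1 : ¬ ∃ t' ∈ r, pref1 t' t := by
      rintro ⟨t', ht', h⟩; exact hnd ⟨t', ht', Or.inl h⟩
    refine ⟨⟨htr, h1⟩, ?_⟩
    rintro ⟨t', ⟨ht'r, ht'und⟩, h2⟩
    have np1 : ¬ pref1 t' t := fun h => h1 ⟨t', ht'r, h⟩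
    have np2 : ¬ pref1 t t' := fun h => ht'und ⟨t, htr, h⟩
    exact hnd ⟨t', ht'r, Or.inr ⟨⟨np1, np2⟩, h2⟩⟩
  · rintro ⟨⟨htr, h1⟩, h2⟩
    refine ⟨htr, ?_⟩
    rintro ⟨t', ht'r, hp | ⟨⟨np1, np2⟩, hp2⟩⟩
    · exact h1 ⟨t', ht'r, hp⟩
    · apply h2
      refine ⟨t', ⟨ht'r, ?_⟩, hp2⟩
      rintro ⟨t'', ht''r, h⟩
      have : ¬ pref1 t'' t := fun hh => h1 ⟨t'', ht''r, hh⟩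
      exact hnt t'' ht''r t htr t' ht'r this np2 h
end

section
/- Let S : Set (Set α) be a family of instances that is closed under subsets (if r ∈ S and r' ⊆ r then r' ∈ S), and let ≻1, ≻2 be preference relations on α such that ≻1 is a weak order relative to S and ≻2 is a weak order relative to the family S' = {r ∈ S | ∀ t1 ∈ r, ∀ t2 ∈ r, ¬ t1 ≻1 t2}. Then the prioritized composition ≻1 ▷ ≻2 is a weak order relative to S. -/
theorem prioritized_weak_order_rel {α : Type*} (S : Set (Set α))
    (hsub : ∀ r ∈ S, ∀ r' ⊆ r, r' ∈ S)
    (pref1 pref2 : α → α → Prop)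
    (hwo1 : ∀ r ∈ S, (∀ t ∈ r, ¬ pref1 t t) ∧
      (∀ t1 ∈ r, ∀ t2 ∈ r, ∀ t3 ∈ r, pref1 t1 t2 → pref1 t2 t3 → pref1 t1 t3) ∧
      (∀ t1 ∈ r, ∀ t2 ∈ r, ∀ t3 ∈ r, ¬ pref1 t1 t2 → ¬ pref1 t2 t3 → ¬ pref1 t1 t3))
    (hwo2 : ∀ r ∈ {r ∈ S | ∀ t1 ∈ r, ∀ t2 ∈ r, ¬ pref1 t1 t2},
      (∀ t ∈ r, ¬ pref2 t t) ∧
      (∀ t1 ∈ r, ∀ t2 ∈ r, ∀ t3 ∈ r, pref2 t1 t2 → pref2 t2 t3 → pref2 t1 t3) ∧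
      (∀ t1 ∈ r, ∀ t2 ∈ r, ∀ t3 ∈ r, ¬ pref2 t1 t2 → ¬ pref2 t2 t3 → ¬ pref2 t1 t3)) :
    ∀ r ∈ S, (∀ t ∈ r, ¬ prioritized pref1 pref2 t t) ∧
      (∀ t1 ∈ r, ∀ t2 ∈ r, ∀ t3 ∈ r,
        prioritized pref1 pref2 t1 t2 → prioritized pref1 pref2 t2 t3 →
        prioritized pref1 pref2 t1 t3) ∧
      (∀ t1 ∈ r, ∀ t2 ∈ r, ∀ t3 ∈ r,
        ¬ prioritized pref1 pref2 t1 t2 → ¬ prioritized pref1 pref2 t2 t3 →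
        ¬ prioritized pref1 pref2 t1 t3) := by
  intro r hr
  obtain ⟨irr1, tr1, ntr1⟩ := hwo1 r hr
  -- helper facts on triples in r
  have cross1 : ∀ a ∈ r, ∀ b ∈ r, ∀ c ∈ r,
      pref1 a b → ¬ pref1 b c → ¬ pref1 c b → pref1 a c := by
    intro a ha b hb c hc hab hbc hcb
    by_contra hac
    exact (ntr1 a ha c hc b hb hac hcb) hab
  have cross2 : ∀ a ∈ r, ∀ b ∈ r, ∀ c ∈ r,
      ¬ pref1 a b → ¬ pref1 b a → pref1 b c → pref1 a c := by
    intro a ha b hb c hc hab hba hbc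
    by_contra hac
    exact (ntr1 b hb a ha c hc hba hac) hbc
  have mkS' : ∀ a ∈ r, ∀ b ∈ r, ∀ c ∈ r,
      ¬ pref1 a b → ¬ pref1 b a → ¬ pref1 b c → ¬ pref1 c b →
      ¬ pref1 a c → ¬ pref1 c a →
      ({a, b, c} : Set α) ∈ {r ∈ S | ∀ t1 ∈ r, ∀ t2 ∈ r, ¬ pref1 t1 t2} := by
    intro a ha b hb c hc h1 h2 h3 h4 h5 h6
    refine ⟨hsub r hr _ ?_, ?_⟩
    · intro x hx
      rcases hx with hx | hx | hx <;> subst hx <;> assumption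
    · intro x hx y hy
      rcases hx with hx | hx | hx <;> rcases hy with hy | hy | hy <;>
        subst hx <;> subst hy <;>
        first
          | exact irr1 _ ha
          | exact irr1 _ hb
          | exact irr1 _ hc
          | assumption
  refine ⟨?_, ?_, ?_⟩
  · intro t ht h
    rcases h with h | ⟨_, h⟩
    · exact irr1 t ht h
    · have hm := mkS' t ht t ht t ht (irr1 t ht) (irr1 t ht) (irr1 t ht)
        (irr1 t ht) (irr1 t ht) (irr1 t ht)
      exact (hwo2 _ hm).1 t (by left; rfl) h
  · intro t1 h1 t2 h2 t3 h3 h12 h23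
    rcases h12 with h12 | ⟨⟨ha, hb⟩, h12⟩
    · rcases h23 with h23 | ⟨⟨hc, hd⟩, h23⟩
      · exact Or.inl (tr1 t1 h1 t2 h2 t3 h3 h12 h23)
      · exact Or.inl (cross1 t1 h1 t2 h2 t3 h3 h12 hc hd)
    · rcases h23 with h23 | ⟨⟨hc, hd⟩, h23⟩
      · exact Or.inl (cross2 t1 h1 t2 h2 t3 h3 ha hb h23)
      · have h13 : ¬ pref1 t1 t3 := ntr1 t1 h1 t2 h2 t3 h3 ha hc
        have h31 : ¬ pref1 t3 t1 := ntr1 t3 h3 t2 h2 t1 h1 hd hb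
        have hm := mkS' t1 h1 t2 h2 t3 h3 ha hb hc hd h13 h31
        refine Or.inr ⟨⟨h13, h31⟩, (hwo2 _ hm).2.1 t1 (by left; rfl) t2
          (by right; left; rfl) t3 (by right; right; rfl) h12 h23⟩
  · intro t1 h1 t2 h2 t3 h3 h12 h23 h13
    have n12 : ¬ pref1 t1 t2 := fun h => h12 (Or.inl h)
    have n23 : ¬ pref1 t2 t3 := fun h => h23 (Or.inl h)
    have n13 : ¬ pref1 t1 t3 := ntr1 t1 h1 t2 h2 t3 h3 n12 n23
    rcases h13 with h13 | ⟨⟨_, n31⟩, p13⟩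
    · exact n13 h13
    · have n21 : ¬ pref1 t2 t1 :=
        fun h => n23 (cross1 t2 h2 t1 h1 t3 h3 h n13 n31)
      have n32 : ¬ pref1 t3 t2 :=
        fun h => n12 (cross2 t1 h1 t3 h3 t2 h2 n13 n31 h)
      have hm := mkS' t1 h1 t2 h2 t3 h3 n12 n21 n23 n32 n13 n31
      have p12 : ¬ pref2 t1 t2 := fun h => h12 (Or.inr ⟨⟨n12, n21⟩, h⟩)
      have p23 : ¬ pref2 t2 t3 := fun h => h23 (Or.inr ⟨⟨n23, n32⟩, h⟩)
      exact (hwo2 _ hm).2.2 t1 (by left; rfl) t2 (by right; left; rfl) t3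
        (by right; right; rfl) p12 p23 p13
end

section
/- Let ≻ be a preference relation on α and p : α → Prop a selection condition. If for all t1, t2 : α, (p t2 ∧ t1 ≻ t2) implies p t1, then for every instance r : Set α: σ_p(ω_≻(r)) = ω_≻(σ_p(r)), i.e., {t ∈ ω_≻(r) | p t} = ω_≻({t ∈ r | p t}). -/
theorem selection_winnow_commute {α : Type*} (pref : α → α → Prop) (p : α → Prop)
    (h : ∀ t1 t2 : α, p t2 ∧ pref t1 t2 → p t1) :
    ∀ r : Set α, {t ∈ winnow pref r | p t} = winnow pref {t ∈ r | p t} := by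
  intro r
  ext t
  simp only [winnow, Set.mem_setOf_eq]
  constructor
  · rintro ⟨⟨ht, hno⟩, hp⟩
    exact ⟨⟨ht, hp⟩, fun ⟨t', ⟨ht', _⟩, hpr⟩ => hno ⟨t', ht', hpr⟩⟩
  · rintro ⟨⟨ht, hp⟩, hno⟩
    refine ⟨⟨ht, fun ⟨t', ht', hpr⟩ => hno ⟨t', ⟨ht', h t' t ⟨hp, hpr⟩⟩, hpr⟩⟩, hp⟩
end

section
/- Let ≻ be a preference relation on α, p : α → Prop a selection condition, and S : Set (Set α) a family of instances. If for every r ∈ S and all t1, t2 ∈ r, (p t2 ∧ t1 ≻ t2) implies p t1, then for every instance r ∈ S: σ_p(ω_≻(r)) = ω_≻(σ_p(r)), i.e., {t ∈ ω_≻(r) | p t} = ω_≻({t ∈ r | p t}). -/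
theorem selection_winnow_commute_rel {α : Type*} (pref : α → α → Prop) (p : α → Prop)
    (S : Set (Set α))
    (h : ∀ r ∈ S, ∀ t1 ∈ r, ∀ t2 ∈ r, p t2 ∧ pref t1 t2 → p t1) :
    ∀ r ∈ S, {t ∈ winnow pref r | p t} = winnow pref {t ∈ r | p t} := by
  intro r hr
  ext t
  simp only [winnow, Set.mem_setOf_eq]
  constructor
  · rintro ⟨⟨ht, hno⟩, hp⟩
    exact ⟨⟨ht, hp⟩, fun ⟨t', ⟨ht', _⟩, hpr⟩ => hno ⟨t', ht', hpr⟩⟩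
  · rintro ⟨⟨ht, hp⟩, hno⟩
    refine ⟨⟨ht, fun ⟨t', ht', hpr⟩ => hno ⟨t', ⟨ht', h r hr t' ht' t ht ⟨hp, hpr⟩⟩, hpr⟩⟩, hp⟩
end

section
/- Let ≻ be an irreflexive preference relation on α, S : Set (Set α) a family of instances closed under subsets, and f : Set α → Prop a further integrity constraint (a predicate on instances). Then the following are equivalent: (1) every instance r ∈ S that additionally satisfies d1^≻ (i.e., ∀ t1 ∈ r, ∀ t2 ∈ r, ¬ t1 ≻ t2) satisfies f; (2) for every r ∈ S, f holds on ω_≻(r). -/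
theorem propagation_iff {α : Type*} (pref : α → α → Prop)
    (hirr : ∀ t, ¬ pref t t)
    (S : Set (Set α)) (hsub : ∀ r ∈ S, ∀ r' ⊆ r, r' ∈ S)
    (f : Set α → Prop) :
    (∀ r ∈ S, (∀ t1 ∈ r, ∀ t2 ∈ r, ¬ pref t1 t2) → f r) ↔
    (∀ r ∈ S, f (winnow pref r)) := by
  constructor
  · intro h r hr
    have hw : winnow pref r ⊆ r := fun t ht => ht.1
    refine h _ (hsub r hr _ hw) ?_
    intro t1 ht1 t2 ht2 hp
    exact ht2.2 ⟨t1, ht1.1, hp⟩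
  · intro h r hr hno
    have : winnow pref r = r := by
      ext t
      constructor
      · exact fun ht => ht.1
      · exact fun ht => ⟨ht, fun ⟨t', ht', hp⟩ => hno t' ht' t ht hp⟩
    exact this ▸ h r hr
end

section
/- Let ≻ be a weak order on α (irreflexive, transitive, and negatively transitive), r : Set α an instance, and t0 ∈ ω_≻(r). Then ω_≻(r) = {t ∈ r | ¬ t0 ≻ t}, i.e., the winnow consists exactly of those tuples of r not dominated by the single tuple t0. -/
theorem winnow_eq_not_dominated {α : Type*} (pref : α → α → Prop)
    (hirr : ∀ x, ¬ pref x x)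
    (htrans : ∀ x y z, pref x y → pref y z → pref x z)
    (hnegtrans : ∀ x y z, ¬ pref x y → ¬ pref y z → ¬ pref x z)
    (r : Set α) (t0 : α) (ht0 : t0 ∈ winnow pref r) :
    winnow pref r = {t ∈ r | ¬ pref t0 t} := by
  obtain ⟨ht0r, ht0nd⟩ := ht0
  ext t
  constructor
  · rintro ⟨htr, hnd⟩
    exact ⟨htr, fun h => hnd ⟨t0, ht0r, h⟩⟩
  · rintro ⟨htr, hnd⟩
    refine ⟨htr, ?_⟩
    rintro ⟨t', ht'r, h⟩
    exact hnegtrans t' t0 t (fun h' => ht0nd ⟨t', ht'r, h'⟩) hnd h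
end

section
/- Let ≻ be a weak order on α (irreflexive, transitive, and negatively transitive) and r : Set α an instance. Then every tuple in the winnow dominates every tuple outside it: for all t ∈ ω_≻(r) and s ∈ r with s ∉ ω_≻(r), we have t ≻ s. -/
theorem winnow_dominates_outside {α : Type*} (pref : α → α → Prop)
    (hirr : ∀ x, ¬ pref x x)
    (htrans : ∀ x y z, pref x y → pref y z → pref x z)
    (hnegtrans : ∀ x y z, ¬ pref x y → ¬ pref y z → ¬ pref x z)
    (r : Set α) :
    ∀ t ∈ winnow pref r, ∀ s ∈ r, s ∉ winnow pref r → pref t s := by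
  rintro t ⟨htr, hnd⟩ s hsr hs
  have : ∃ u ∈ r, pref u s := by
    by_contra h
    exact hs ⟨hsr, h⟩
  obtain ⟨u, hur, hus⟩ := this
  by_contra hts
  exact hnegtrans u t s (fun h => hnd ⟨u, hur, h⟩) hts hus
end

section
/- Let ≻1 and ≻2 be weak orders on α (each irreflexive, transitive, and negatively transitive). Then the prioritized composition ≻1 ▷ ≻2 is also a weak order (irreflexive, transitive, and negatively transitive). -/
theorem prioritized_weak_order {α : Type*} (pref1 pref2 : α → α → Prop)
    (hirr1 : ∀ x, ¬ pref1 x x)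
    (htrans1 : ∀ x y z, pref1 x y → pref1 y z → pref1 x z)
    (hnegtrans1 : ∀ x y z, ¬ pref1 x y → ¬ pref1 y z → ¬ pref1 x z)
    (hirr2 : ∀ x, ¬ pref2 x x)
    (htrans2 : ∀ x y z, pref2 x y → pref2 y z → pref2 x z)
    (hnegtrans2 : ∀ x y z, ¬ pref2 x y → ¬ pref2 y z → ¬ pref2 x z) :
    (∀ x, ¬ prioritized pref1 pref2 x x) ∧
    (∀ x y z, prioritized pref1 pref2 x y → prioritized pref1 pref2 y z →
      prioritized pref1 pref2 x z) ∧
    (∀ x y z, ¬ prioritized pref1 pref2 x y → ¬ prioritized pref1 pref2 y z →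
      ¬ prioritized pref1 pref2 x z) := by
  refine ⟨?_, ?_, ?_⟩
  · intro x h
    rcases h with h | ⟨_, h2⟩
    · exact hirr1 x h
    · exact hirr2 x h2
  · rintro x y z (hxy | ⟨⟨hxy1, hyx1⟩, hxy2⟩) (hyz | ⟨⟨hyz1, hzy1⟩, hyz2⟩)
    · exact Or.inl (htrans1 x y z hxy hyz)
    · left
      by_contra hxz
      exact hnegtrans1 x z y hxz hzy1 hxy
    · left
      by_contra hxz
      exact hnegtrans1 y x z hyx1 hxz hyz
    · right
      exact ⟨⟨hnegtrans1 x y z hxy1 hyz1, hnegtrans1 z y x hzy1 hyx1⟩,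
        htrans2 x y z hxy2 hyz2⟩
  · intro x y z hxy hyz hxz
    have hxy1 : ¬ pref1 x y := fun h => hxy (Or.inl h)
    have hyz1 : ¬ pref1 y z := fun h => hyz (Or.inl h)
    rcases hxz with hxz1 | ⟨⟨hxz1, hzx1⟩, hxz2⟩
    · exact hnegtrans1 x y z hxy1 hyz1 hxz1
    · have hyx1 : ¬ pref1 y x := hnegtrans1 y z x hyz1 hzx1
      have hzy1 : ¬ pref1 z y := hnegtrans1 z x y hzx1 hxy1
      have hxy2 : ¬ pref2 x y := fun h => hxy (Or.inr ⟨⟨hxy1, hyx1⟩, h⟩)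
      have hyz2 : ¬ pref2 y z := fun h => hyz (Or.inr ⟨⟨hyz1, hzy1⟩, h⟩)
      exact hnegtrans2 x y z hxy2 hyz2 hxz2
end
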